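/- Let π be a 312-avoiding permutation of length n, and for 0 ≤ i ≤ n let τ_i be the output of the 312-insertion step at position i applied to π. Then the map i ↦ (|τ_i|, Des(τ_i)) is injective on {0,…,n}, where Des(σ) = {j : σ_j > σ_{j+1}} is the descent set of σ. In other words, knowing π together with the length and descent set of the result determines at which position the new maximum was inserted. -/

import Mathlib

open List

attribute [local instance] Classical.propDecidable

/-- `l` is a permutation of length `n`, i.e. a list containing each of `1,…,n` exactly once. -/
def IsPermList (n : ℕ) (l : List ℕ) : Prop :=
  l.Perm (List.range' 1 n)

/-- Two sequences (with distinct entries) are order-isomorphic: same length and the same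
pairwise order relations. -/
def OrderIsoList (a b : List ℕ) : Prop :=
  a.length = b.length ∧
    ∀ i j, i < j → j < a.length →
      (a.getD i 0 < a.getD j 0 ↔ b.getD i 0 < b.getD j 0)

/-- `l` contains the pattern `p`: some subsequence of `l` is order-isomorphic to `p`. -/
def ContainsPat (l p : List ℕ) : Prop :=
  ∃ s, s.Sublist l ∧ OrderIsoList s p

/-- `l` avoids the pattern `p`. -/
def AvoidsPat (l p : List ℕ) : Prop := ¬ ContainsPat l p

/-- Relabel the entries of a list of distinct naturals order-isomorphically with `1,…,m`. -/
def standardize (l : List ℕ) : List ℕ :=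
  l.map fun x => (l.filter fun y => y ≤ x).length

/-- Insert the new maximum value `l.length + 1` immediately after the first `i` entries. -/
def insertMax (l : List ℕ) (i : ℕ) : List ℕ :=
  l.take i ++ (l.length + 1) :: l.drop i

/-- The insertion step at position `i` for the pattern `p`: insert a new maximum after the
first `i` entries, keep the longest prefix avoiding `p` (i.e. remove the minimal suffix so
that the result avoids `p`), then standardize. -/
noncomputable def insStep (p l : List ℕ) (i : ℕ) : List ℕ :=
  standardize ((insertMax l i).take
    (Nat.findGreatest (fun k => AvoidsPat ((insertMax l i).take k) p)
      (insertMax l i).length))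

/-- The descent set of `l`: the set of (1-indexed) positions `j ∈ {1,…,m-1}` with
`l_j > l_{j+1}` (here `l.getD (j-1) 0` is the `j`-th entry of `l`). -/
def desSet (l : List ℕ) : Set ℕ :=
  {j | 1 ≤ j ∧ j < l.length ∧ l.getD j 0 < l.getD (j - 1) 0}

/-!
Since `π` avoids 312, every occurrence of 312 after inserting the new maximum at position `i`
uses that maximum as its `3`. Hence the kept prefix contains the maximum, and from the maximum
on it can only descend, since an ascent there would complete a 312. If positions `i < j` gave
outputs of equal length, then `j` would lie in the descending stretch of the output for `i`,
so it would be a descent there; in the output for `j`, however, the maximum sits right after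
position `j`, so `j` is an ascent.
-/

lemma containsPat_312_iff (l : List ℕ) :
    ContainsPat l [3, 1, 2] ↔ ∃ x y z : ℕ, [x, y, z] <+ l ∧ y < z ∧ z ≤ x := by
  constructor
  · rintro ⟨s, hs, hlen, hrel⟩
    match s, hlen with
    | [x, y, z], _ =>
      have hyz := (hrel 1 2 (by norm_num) (by simp)).mpr (by norm_num)
      have hzx := (hrel 0 2 (by norm_num) (by simp)).not.mpr (by norm_num)
      exact ⟨x, y, z, hs, by simpa using hyz, by simpa using hzx⟩
  · rintro ⟨x, y, z, hs, hyz, hzx⟩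
    refine ⟨[x, y, z], hs, rfl, fun i j hij hj => ?_⟩
    simp only [length_cons, length_nil] at hj
    interval_cases j <;> interval_cases i <;> simp <;> omega

lemma AvoidsPat.sublist {l l' p : List ℕ} (h : AvoidsPat l p) (hs : l' <+ l) :
    AvoidsPat l' p :=
  fun ⟨s, hsl', hiso⟩ => h ⟨s, hsl'.trans hs, hiso⟩

lemma avoidsPat_312_append_singleton {l : List ℕ} {c : ℕ} (hc : ∀ x ∈ l, x < c)
    (h : AvoidsPat l [3, 1, 2]) : AvoidsPat (l ++ [c]) [3, 1, 2] := by
  rw [AvoidsPat, containsPat_312_iff]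
  rintro ⟨x, y, z, hs, hyz, hzx⟩
  obtain ⟨l₁, l₂, heq, h₁, h₂⟩ := sublist_append_iff.mp hs
  rcases sublist_singleton.mp h₂ with rfl | rfl
  · rw [append_nil] at heq
    exact h ((containsPat_312_iff l).mpr ⟨x, y, z, heq ▸ h₁, hyz, hzx⟩)
  · obtain ⟨rfl, hzc⟩ := append_inj' (show [x, y] ++ [z] = l₁ ++ [c] from heq) rfl
    have := hc x (h₁.subset (by simp))
    simp only [cons.injEq, and_true] at hzc
    omega

lemma mem_desSet_iff {l : List ℕ} {j : ℕ} :
    j ∈ desSet l ↔ 1 ≤ j ∧ ∃ h : j < l.length, l[j] < l[j - 1] := by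
  simp only [desSet, Set.mem_ofPred_eq]
  constructor
  · rintro ⟨h1, h2, h3⟩
    rw [getD_eq_getElem _ _ h2, getD_eq_getElem _ _ (by omega)] at h3
    exact ⟨h1, h2, h3⟩
  · rintro ⟨h1, h2, h3⟩
    rw [getD_eq_getElem _ _ h2, getD_eq_getElem _ _ (by omega)]
    exact ⟨h1, h2, h3⟩

lemma desSet_take_subset (l : List ℕ) (m : ℕ) : desSet (l.take m) ⊆ desSet l := by
  intro j hj
  obtain ⟨h1, h2, h3⟩ := mem_desSet_iff.mp hj
  simp only [getElem_take] at h3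
  exact mem_desSet_iff.mpr ⟨h1, by simp at h2; omega, h3⟩

lemma length_filter_le_le_of_le (l : List ℕ) {a b : ℕ} (hab : a ≤ b) :
    (l.filter (· ≤ a)).length ≤ (l.filter (· ≤ b)).length :=
  (monotone_filter_right l fun x hx => by simp at hx ⊢; omega).length_le

lemma length_filter_le_lt_of_lt {l : List ℕ} {a b : ℕ} (hab : a < b) (hb : b ∈ l) :
    (l.filter (· ≤ a)).length < (l.filter (· ≤ b)).length := by
  have hfilter : l.filter (· ≤ a) = (l.filter (· ≤ b)).filter (· ≤ a) := by
    rw [filter_filter]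
    exact filter_congr fun x _ => by simp; omega
  rw [hfilter, length_filter_lt_length_iff_exists]
  exact ⟨b, mem_filter.mpr ⟨hb, by simp⟩, by simp; omega⟩

lemma length_filter_le_lt_iff {l : List ℕ} {a b : ℕ} (hb : b ∈ l) :
    (l.filter (· ≤ a)).length < (l.filter (· ≤ b)).length ↔ a < b :=
  ⟨fun h => not_le.mp fun hba => (length_filter_le_le_of_le l hba).not_gt h,
    fun h => length_filter_le_lt_of_lt h hb⟩

lemma length_standardize (l : List ℕ) : (standardize l).length = l.length :=
  length_map _

lemma desSet_standardize (l : List ℕ) : desSet (standardize l) = desSet l := by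
  ext j
  simp only [mem_desSet_iff, standardize, length_map, getElem_map,
    length_filter_le_lt_iff (getElem_mem _)]

lemma triple_sublist_of_lt (l : List ℕ) {a b c : ℕ} (hab : a < b) (hbc : b < c)
    (hc : c < l.length) : [l[a], l[b], l[c]] <+ l := by
  have hpair : [l[b], l[c]] <+ l.drop b := by
    rw [drop_eq_getElem_cons (by omega)]
    have hmem : l[c] ∈ l.drop c := by rw [drop_eq_getElem_cons hc]; exact mem_cons_self
    exact (singleton_sublist.mpr ((drop_sublist_drop_left l hbc).subset hmem)).cons_cons _
  refine Sublist.trans ?_ (drop_sublist a l)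
  rw [drop_eq_getElem_cons (by omega)]
  exact (hpair.trans (drop_sublist_drop_left l hab)).cons_cons _

lemma mem_desSet_of_avoidsPat_312 {l : List ℕ} (hnd : l.Nodup) (ha : AvoidsPat l [3, 1, 2])
    {k j : ℕ} (hk : k < l.length) (hmax : ∀ x ∈ l, x ≤ l[k]) (hkj : k < j)
    (hj : j < l.length) : j ∈ desSet l := by
  refine mem_desSet_iff.mpr ⟨by omega, hj, ?_⟩
  by_contra hle
  have hlt : l[j - 1] < l[j] :=
    lt_of_le_of_ne (not_lt.mp hle) fun h => by have := hnd.getElem_inj_iff.mp h; omega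
  obtain rfl | hk' : k = j - 1 ∨ k < j - 1 := by omega
  · exact absurd (hmax _ (getElem_mem _)) (not_le.mpr hlt)
  · exact ha ((containsPat_312_iff l).mpr
      ⟨_, _, _, triple_sublist_of_lt l hk' (by omega) hj, hlt, hmax _ (getElem_mem _)⟩)

section insertMax

variable {l : List ℕ} {i : ℕ}

lemma insertMax_perm (l : List ℕ) (i : ℕ) : insertMax l i ~ (l.length + 1) :: l := by
  rw [insertMax]
  exact perm_middle.trans (by rw [take_append_drop])

lemma length_insertMax (l : List ℕ) (i : ℕ) : (insertMax l i).length = l.length + 1 :=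
  (insertMax_perm l i).length_eq

lemma le_of_mem_insertMax (hl : ∀ x ∈ l, x ≤ l.length) :
    ∀ x ∈ insertMax l i, x ≤ l.length + 1 := by
  intro x hx
  rcases mem_cons.mp ((insertMax_perm l i).subset hx) with rfl | hx
  exacts [le_rfl, (hl x hx).trans (Nat.le_succ _)]

lemma nodup_insertMax (hnd : l.Nodup) (hl : ∀ x ∈ l, x ≤ l.length) :
    (insertMax l i).Nodup :=
  (insertMax_perm l i).nodup_iff.mpr (nodup_cons.mpr ⟨fun h => by have := hl _ h; omega, hnd⟩)

lemma getElem_insertMax_self (hi : i ≤ l.length) :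
    (insertMax l i)[i]'(by rw [length_insertMax]; omega) = l.length + 1 := by
  simp [insertMax, getElem_append_right, hi]

lemma getElem_insertMax_of_lt {j : ℕ} (hji : j < i) (hi : i ≤ l.length) :
    (insertMax l i)[j]'(by rw [length_insertMax]; omega) = l[j] := by
  simp [insertMax, getElem_append_left, hji, hi]

lemma take_succ_insertMax (hi : i ≤ l.length) :
    (insertMax l i).take (i + 1) = l.take i ++ [l.length + 1] := by
  simp [insertMax, take_append, hi]

end insertMax

noncomputable def avoidingPrefixLength (p l : List ℕ) (i : ℕ) : ℕ :=
  Nat.findGreatest (fun k => AvoidsPat ((insertMax l i).take k) p) (insertMax l i).length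

section insStep

variable {l : List ℕ} {i : ℕ}

lemma insStep_eq (p l : List ℕ) (i : ℕ) :
    insStep p l i = standardize ((insertMax l i).take (avoidingPrefixLength p l i)) :=
  rfl

lemma avoidingPrefixLength_le (p l : List ℕ) (i : ℕ) :
    avoidingPrefixLength p l i ≤ (insertMax l i).length :=
  Nat.findGreatest_le _

lemma length_insStep (p l : List ℕ) (i : ℕ) :
    (insStep p l i).length = avoidingPrefixLength p l i := by
  rw [insStep_eq, length_standardize, length_take, min_eq_left (avoidingPrefixLength_le p l i)]

lemma desSet_insStep (p l : List ℕ) (i : ℕ) :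
    desSet (insStep p l i) = desSet ((insertMax l i).take (avoidingPrefixLength p l i)) := by
  rw [insStep_eq, desSet_standardize]

lemma not_mem_desSet_insStep (p : List ℕ) (hl : ∀ x ∈ l, x ≤ l.length)
    {j : ℕ} (hj0 : 0 < j) (hj : j ≤ l.length) : j ∉ desSet (insStep p l j) := by
  intro hmem
  rw [desSet_insStep] at hmem
  obtain ⟨-, hlt, hdes⟩ := mem_desSet_iff.mp (desSet_take_subset _ _ hmem)
  rw [getElem_insertMax_self hj, getElem_insertMax_of_lt (by omega) hj] at hdes
  have := hl _ (getElem_mem (by omega : j - 1 < l.length))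
  omega

lemma avoidsPat_312_take_succ_insertMax
    (hl : ∀ x ∈ l, x ≤ l.length) (ha : AvoidsPat l [3, 1, 2]) (hi : i ≤ l.length) :
    AvoidsPat ((insertMax l i).take (i + 1)) [3, 1, 2] := by
  rw [take_succ_insertMax hi]
  exact avoidsPat_312_append_singleton
    (fun x hx => Nat.lt_succ_of_le (hl x ((take_sublist _ _).subset hx)))
    (ha.sublist (take_sublist _ _))

lemma lt_avoidingPrefixLength_312
    (hl : ∀ x ∈ l, x ≤ l.length) (ha : AvoidsPat l [3, 1, 2]) (hi : i ≤ l.length) :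
    i < avoidingPrefixLength [3, 1, 2] l i :=
  Nat.le_findGreatest (show i + 1 ≤ (insertMax l i).length by rw [length_insertMax]; omega)
    (avoidsPat_312_take_succ_insertMax hl ha hi)

lemma avoidsPat_312_take_avoidingPrefixLength
    (hl : ∀ x ∈ l, x ≤ l.length) (ha : AvoidsPat l [3, 1, 2]) (hi : i ≤ l.length) :
    AvoidsPat ((insertMax l i).take (avoidingPrefixLength [3, 1, 2] l i)) [3, 1, 2] :=
  Nat.findGreatest_spec (P := fun k => AvoidsPat ((insertMax l i).take k) [3, 1, 2])
    (show i + 1 ≤ (insertMax l i).length by rw [length_insertMax]; omega)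
    (avoidsPat_312_take_succ_insertMax hl ha hi)

lemma mem_desSet_insStep_312 (hl : ∀ x ∈ l, x ≤ l.length) (ha : AvoidsPat l [3, 1, 2])
    (hnd : l.Nodup) {j : ℕ} (hij : i < j)
    (hj : j < (insStep [3, 1, 2] l i).length) : j ∈ desSet (insStep [3, 1, 2] l i) := by
  have hL := avoidingPrefixLength_le [3, 1, 2] l i
  rw [length_insertMax] at hL
  rw [length_insStep] at hj
  have hi : i ≤ l.length := by omega
  rw [desSet_insStep]
  refine mem_desSet_of_avoidsPat_312 ((nodup_insertMax hnd hl).sublist (take_sublist _ _))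
    (avoidsPat_312_take_avoidingPrefixLength hl ha hi) (k := i)
    (by rw [length_take, length_insertMax]; omega) ?_ hij
    (by rw [length_take, length_insertMax]; omega)
  rw [getElem_take, getElem_insertMax_self hi]
  exact fun x hx => le_of_mem_insertMax hl x ((take_sublist _ _).subset hx)

lemma insStep_312_ne_of_lt (hl : ∀ x ∈ l, x ≤ l.length) (ha : AvoidsPat l [3, 1, 2])
    (hnd : l.Nodup) {j : ℕ} (hij : i < j) (hj : j ≤ l.length) :
    ((insStep [3, 1, 2] l i).length, desSet (insStep [3, 1, 2] l i)) ≠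
      ((insStep [3, 1, 2] l j).length, desSet (insStep [3, 1, 2] l j)) := by
  intro heq
  obtain ⟨hlen, hdes⟩ := Prod.mk.inj heq
  have hj_lt : j < (insStep [3, 1, 2] l i).length := by
    rw [hlen, length_insStep]
    exact lt_avoidingPrefixLength_312 hl ha hj
  exact not_mem_desSet_insStep _ hl (by omega) hj
    (hdes ▸ mem_desSet_insStep_312 hl ha hnd hij hj_lt)

end insStep

/-- For a 312-avoiding permutation `π` of length `n`, the map sending an insertion
position `i ∈ {0,…,n}` to the pair (length, descent set) of the output of the
312-insertion step at position `i` is injective: the length and descent set of the result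
determine where the new maximum was inserted. -/
theorem insStep_des_injective (n : ℕ) (π : List ℕ)
    (h : IsPermList n π) (ha : AvoidsPat π [3, 1, 2]) :
    ∀ i j, i ≤ n → j ≤ n →
      ((insStep [3, 1, 2] π i).length, desSet (insStep [3, 1, 2] π i)) =
        ((insStep [3, 1, 2] π j).length, desSet (insStep [3, 1, 2] π j)) →
      i = j := by
  have hlen : π.length = n := by simpa using h.length_eq
  have hl : ∀ x ∈ π, x ≤ π.length := fun x hx => by
    have := mem_range'_1.mp (h.subset hx)
    omega
  have hnd : π.Nodup := h.nodup_iff.mpr nodup_range'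
  intro i j hi hj heq
  rcases lt_trichotomy i j with hij | rfl | hji
  · exact absurd heq (insStep_312_ne_of_lt hl ha hnd hij (by omega))
  · rfl
  · exact absurd heq.symm (insStep_312_ne_of_lt hl ha hnd hji (by omega))
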